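/- (Control, one-step suboptimality bound) Let π_k be the approximately S-improved policy with S^{π_k} V_{k-1} = S* V_{k-1} + ε^policy_k. If γ' ≥ max(‖G^{π*}‖_∞, ‖G^{π_k}‖_∞) and γ' < 1, then ‖V* - V^{π_k}‖_∞ ≤ (2γ'/(1-γ')) ‖V* - V_{k-1}‖_∞ + (1/(1-γ')) ‖ε^policy_k‖_∞. -/

import Mathlib

open Matrix

/-- Supremum norm on vectors. -/
noncomputable def vnorm {d : ℕ} (v : Fin d → ℝ) : ℝ := ⨆ i, |v i|

/-- Maximum absolute row sum: the operator norm induced by the supremum norm. -/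
noncomputable def mnorm {d : ℕ} (M : Matrix (Fin d) (Fin d) ℝ) : ℝ :=
  ⨆ i, ∑ j, |M i j|

/-- Transition matrix of a deterministic policy. -/
def Pmat {d m : ℕ} (P : Fin d → Fin m → Fin d → ℝ) (pol : Fin d → Fin m) :
    Matrix (Fin d) (Fin d) ℝ :=
  fun x y => P x (pol x) y

/-- Reward vector of a deterministic policy. -/
def rvec {d m : ℕ} (r : Fin d → Fin m → ℝ) (pol : Fin d → Fin m) : Fin d → ℝ :=
  fun x => r x (pol x)

/-- The Varga operator `S^π V = (I - γ P̂^π)⁻¹ (r^π + γ (P^π - P̂^π) V)`. -/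
noncomputable def varga {d : ℕ} (γ : ℝ) (Ppol Phatpol : Matrix (Fin d) (Fin d) ℝ)
    (rpol V : Fin d → ℝ) : Fin d → ℝ :=
  ((1 - γ • Phatpol)⁻¹).mulVec (rpol + γ • ((Ppol - Phatpol).mulVec V))

/-- The Varga optimality operator `S* V = max_π S^π V` (componentwise over policies). -/
noncomputable def Sstar {d m : ℕ} (γ : ℝ) (P Phat : Fin d → Fin m → Fin d → ℝ)
    (r : Fin d → Fin m → ℝ) (V : Fin d → ℝ) : Fin d → ℝ :=
  fun x => ⨆ pol : Fin d → Fin m, varga γ (Pmat P pol) (Pmat Phat pol) (rvec r pol) V x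

/-!
`V*` and `V^{π_k}` are fixed points of `S^{π*}` and `S^{π_k}`, and each `S^π` is affine with
linear part `G^π`. Passing from `S^{π*}` to `S^{π_k}` through `W`, where approximate greediness
gives `S^{π*} W + ε ≤ S^{π_k} W`, bounds the nonnegative gap `V* - V^{π_k}` componentwise by
`G^{π*}(V* - W) - G^{π_k}(V* - W) - ε + G^{π_k}(V* - V^{π_k})`; the last term has norm at most
`γ'` times that of the gap and is absorbed.

Invertibility of `I - γ P̂^π` and `V^{π_k} ≤ V*` both come from the maximum principle:
`y ≤ γ Q y` with `Q` row-stochastic and `0 ≤ γ < 1` forces `y ≤ 0`.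
-/

section MaximumPrinciple

variable {ι : Type*} [Fintype ι] [DecidableEq ι] {Q : Matrix ι ι ℝ} {γ : ℝ}

theorem le_zero_of_le_smul_mulVec (hQ : Q ∈ rowStochastic ℝ ι) (hγ0 : 0 ≤ γ) (hγ1 : γ < 1)
    {y : ι → ℝ} (hy : y ≤ γ • (Q *ᵥ y)) : y ≤ 0 := by
  intro j
  have : Nonempty ι := ⟨j⟩
  obtain ⟨i, hi⟩ := Finite.exists_max y
  have hQy : (Q *ᵥ y) i ≤ y i :=
    calc (Q *ᵥ y) i = ∑ k, Q i k * y k := rfl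
      _ ≤ ∑ k, Q i k * y i :=
        Finset.sum_le_sum fun k _ =>
          mul_le_mul_of_nonneg_left (hi k) (nonneg_of_mem_rowStochastic hQ)
      _ = y i := by rw [← Finset.sum_mul, sum_row_of_mem_rowStochastic hQ, one_mul]
  have hyi : y i ≤ γ * y i := (hy i).trans (mul_le_mul_of_nonneg_left hQy hγ0)
  have hyi_nonpos : y i ≤ 0 := by nlinarith
  exact (hi j).trans hyi_nonpos

theorem isUnit_det_one_sub_smul (hQ : Q ∈ rowStochastic ℝ ι) (hγ0 : 0 ≤ γ) (hγ1 : γ < 1) :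
    IsUnit (1 - γ • Q).det := by
  refine isUnit_iff_ne_zero.2 fun hdet => ?_
  obtain ⟨v, hv0, hv⟩ := exists_mulVec_eq_zero_iff.2 hdet
  have hfix : v = γ • (Q *ᵥ v) := by
    rwa [sub_mulVec, one_mulVec, smul_mulVec, sub_eq_zero] at hv
  have hneg : -v ≤ γ • (Q *ᵥ -v) := by rw [mulVec_neg, smul_neg, ← hfix]
  exact hv0 (le_antisymm (le_zero_of_le_smul_mulVec hQ hγ0 hγ1 hfix.le)
    (neg_nonpos.1 (le_zero_of_le_smul_mulVec hQ hγ0 hγ1 hneg)))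

theorem inv_one_sub_smul_mulVec_eq (hdet : IsUnit (1 - γ • Q).det) (u : ι → ℝ) :
    (1 - γ • Q)⁻¹ *ᵥ u = u + γ • (Q *ᵥ ((1 - γ • Q)⁻¹ *ᵥ u)) := by
  have h : (1 - γ • Q) *ᵥ ((1 - γ • Q)⁻¹ *ᵥ u) = u := by
    rw [mulVec_mulVec, mul_nonsing_inv _ hdet, one_mulVec]
  rw [sub_mulVec, one_mulVec, smul_mulVec] at h
  exact sub_eq_iff_eq_add.1 h

theorem inv_one_sub_smul_mulVec_le (hQ : Q ∈ rowStochastic ℝ ι) (hγ0 : 0 ≤ γ) (hγ1 : γ < 1)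
    {u V : ι → ℝ} (hV : u + γ • (Q *ᵥ V) ≤ V) : (1 - γ • Q)⁻¹ *ᵥ u ≤ V := by
  set x := (1 - γ • Q)⁻¹ *ᵥ u
  have hx : x = u + γ • (Q *ᵥ x) :=
    inv_one_sub_smul_mulVec_eq (isUnit_det_one_sub_smul hQ hγ0 hγ1) u
  refine sub_nonpos.1 (le_zero_of_le_smul_mulVec hQ hγ0 hγ1 ?_)
  calc x - V ≤ x - (u + γ • (Q *ᵥ V)) := sub_le_sub_left hV x
    _ = γ • (Q *ᵥ (x - V)) := by
      rw [mulVec_sub, smul_sub]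
      conv_lhs => rw [hx]
      abel

end MaximumPrinciple

theorem sub_le_of_affine_of_fixed {ι : Type*} [Fintype ι] {S₁ S₂ : (ι → ℝ) → ι → ℝ}
    {G₁ G₂ : Matrix ι ι ℝ} (hS₁ : ∀ V V', S₁ V - S₁ V' = G₁ *ᵥ (V - V'))
    (hS₂ : ∀ V V', S₂ V - S₂ V' = G₂ *ᵥ (V - V')) {V₁ V₂ W ε : ι → ℝ}
    (h₁ : S₁ V₁ = V₁) (h₂ : S₂ V₂ = V₂) (hW : S₁ W + ε ≤ S₂ W) :
    V₁ - V₂ ≤ G₁ *ᵥ (V₁ - W) - G₂ *ᵥ (V₁ - W) - ε + G₂ *ᵥ (V₁ - V₂) := by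
  have e₁ := hS₁ V₁ W
  have e₂ := hS₂ V₂ W
  rw [h₁] at e₁
  rw [h₂] at e₂
  have hsplit : G₂ *ᵥ (V₂ - W) = G₂ *ᵥ (V₁ - W) - G₂ *ᵥ (V₁ - V₂) := by
    rw [← mulVec_sub, sub_sub_sub_cancel_left]
  calc V₁ - V₂ = (V₁ - S₁ W) + (S₁ W + ε) - (V₂ - S₂ W) - S₂ W - ε := by abel
    _ ≤ (V₁ - S₁ W) + S₂ W - (V₂ - S₂ W) - S₂ W - ε := by gcongr
    _ = G₁ *ᵥ (V₁ - W) - G₂ *ᵥ (V₁ - W) - ε + G₂ *ᵥ (V₁ - V₂) := by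
      rw [e₁, e₂, hsplit]
      abel

section SupNorm

variable {d : ℕ}

theorem vnorm_eq_norm (v : Fin d → ℝ) : vnorm v = ‖v‖ := by
  rcases isEmpty_or_nonempty (Fin d) with hd | hd
  · simp [vnorm, Real.iSup_of_isEmpty, Subsingleton.elim v 0]
  have hle : ∀ i, |v i| ≤ vnorm v := fun i => le_ciSup (Finite.bddAbove_range fun i => |v i|) i
  exact le_antisymm (ciSup_le fun i => norm_le_pi_norm v i)
    ((pi_norm_le_iff_of_nonneg ((abs_nonneg _).trans (hle hd.some))).2 hle)

theorem mnorm_nonneg (M : Matrix (Fin d) (Fin d) ℝ) : 0 ≤ mnorm M :=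
  Real.iSup_nonneg fun _ => Finset.sum_nonneg fun _ _ => abs_nonneg _

theorem norm_mulVec_le_mnorm_mul (M : Matrix (Fin d) (Fin d) ℝ) (v : Fin d → ℝ) :
    ‖M *ᵥ v‖ ≤ mnorm M * ‖v‖ := by
  refine (pi_norm_le_iff_of_nonneg (mul_nonneg (mnorm_nonneg M) (norm_nonneg v))).2 fun i => ?_
  calc ‖(M *ᵥ v) i‖ = |∑ j, M i j * v j| := rfl
    _ ≤ ∑ j, |M i j| * ‖v‖ := by
      refine (Finset.abs_sum_le_sum_abs _ _).trans (Finset.sum_le_sum fun j _ => ?_)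
      rw [abs_mul]
      exact mul_le_mul_of_nonneg_left (norm_le_pi_norm v j) (abs_nonneg _)
    _ ≤ mnorm M * ‖v‖ := by
      rw [← Finset.sum_mul]
      exact mul_le_mul_of_nonneg_right
        (le_ciSup (Finite.bddAbove_range fun i => ∑ j, |M i j|) i) (norm_nonneg v)

theorem norm_le_of_le_add_mulVec {δ u : Fin d → ℝ} {G : Matrix (Fin d) (Fin d) ℝ} {c : ℝ}
    (hδ0 : 0 ≤ δ) (hδ : δ ≤ u + G *ᵥ δ) (hG : mnorm G ≤ c) (hc : c < 1) :
    ‖δ‖ ≤ ‖u‖ / (1 - c) := by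
  have hc0 : 0 ≤ c := (mnorm_nonneg G).trans hG
  have hGδ : ‖G *ᵥ δ‖ ≤ c * ‖δ‖ :=
    (norm_mulVec_le_mnorm_mul G δ).trans (mul_le_mul_of_nonneg_right hG (norm_nonneg δ))
  have hrec : ‖δ‖ ≤ ‖u‖ + c * ‖δ‖ := by
    refine (pi_norm_le_iff_of_nonneg (by positivity)).2 fun i => ?_
    rw [Real.norm_of_nonneg (hδ0 i)]
    calc δ i ≤ u i + (G *ᵥ δ) i := hδ i
      _ ≤ ‖u‖ + ‖G *ᵥ δ‖ := add_le_add ((le_abs_self _).trans (norm_le_pi_norm u i))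
          ((le_abs_self _).trans (norm_le_pi_norm (G *ᵥ δ) i))
      _ ≤ ‖u‖ + c * ‖δ‖ := by gcongr
  rw [le_div_iff₀ (by linarith)]
  linarith

end SupNorm

section Varga

variable {d m : ℕ}

theorem Pmat_mem_rowStochastic {P : Fin d → Fin m → Fin d → ℝ}
    (hP : ∀ x a, (∀ y, 0 ≤ P x a y) ∧ ∑ y, P x a y = 1) (pol : Fin d → Fin m) :
    Pmat P pol ∈ rowStochastic ℝ (Fin d) :=
  mem_rowStochastic_iff_sum.2 ⟨fun i j => (hP i (pol i)).1 j, fun i => (hP i (pol i)).2⟩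

theorem rvec_add_smul_Pmat_mulVec_le {γ : ℝ} {P : Fin d → Fin m → Fin d → ℝ}
    {r : Fin d → Fin m → ℝ} {V : Fin d → ℝ}
    (hbell : ∀ x, V x = ⨆ a, (r x a + γ * ∑ y, P x a y * V y)) (pol : Fin d → Fin m) :
    rvec r pol + γ • (Pmat P pol *ᵥ V) ≤ V := by
  intro x
  rw [hbell x]
  exact le_ciSup (Finite.bddAbove_range fun a => r x a + γ * ∑ y, P x a y * V y) (pol x)

theorem varga_sub_varga (γ : ℝ) (Pp Php : Matrix (Fin d) (Fin d) ℝ) (rp V₁ V₂ : Fin d → ℝ) :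
    varga γ Pp Php rp V₁ - varga γ Pp Php rp V₂ =
      ((1 - γ • Php)⁻¹ * (γ • (Pp - Php))) *ᵥ (V₁ - V₂) := by
  rw [varga, varga, ← mulVec_sub, ← mulVec_mulVec, add_sub_add_left_eq_sub, ← smul_sub,
    ← mulVec_sub, smul_mulVec]

theorem varga_eq_self {γ : ℝ} {Pp Php : Matrix (Fin d) (Fin d) ℝ} {rp V : Fin d → ℝ}
    (hdet : IsUnit (1 - γ • Php).det) (hV : rp + γ • (Pp *ᵥ V) = V) :
    varga γ Pp Php rp V = V := by
  have h : rp + γ • ((Pp - Php) *ᵥ V) = (1 - γ • Php) *ᵥ V := by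
    rw [sub_mulVec, sub_mulVec, one_mulVec, smul_sub, ← add_sub_assoc, hV, smul_mulVec]
  rw [varga, h, mulVec_mulVec, nonsing_inv_mul _ hdet, one_mulVec]

theorem varga_le_Sstar (γ : ℝ) (P Phat : Fin d → Fin m → Fin d → ℝ) (r : Fin d → Fin m → ℝ)
    (pol : Fin d → Fin m) (V : Fin d → ℝ) :
    varga γ (Pmat P pol) (Pmat Phat pol) (rvec r pol) V ≤ Sstar γ P Phat r V := fun x =>
  le_ciSup (Finite.bddAbove_range fun pol : Fin d → Fin m =>
    varga γ (Pmat P pol) (Pmat Phat pol) (rvec r pol) V x) pol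

end Varga

theorem osvi_control_one_step_general {d m : ℕ}
    (γ : ℝ) (hγ0 : 0 ≤ γ) (hγ1 : γ < 1)
    (P Phat : Fin d → Fin m → Fin d → ℝ) (r : Fin d → Fin m → ℝ)
    (hP : ∀ x a, (∀ y, 0 ≤ P x a y) ∧ ∑ y, P x a y = 1)
    (hPhat : ∀ x a, (∀ y, 0 ≤ Phat x a y) ∧ ∑ y, Phat x a y = 1)
    (Vstar : Fin d → ℝ) (πstar : Fin d → Fin m)
    (hbell : ∀ x, Vstar x = ⨆ a, (r x a + γ * ∑ y, P x a y * Vstar y))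
    (hopt : ∀ x, Vstar x = r x (πstar x) + γ * ∑ y, P x (πstar x) y * Vstar y)
    (W : Fin d → ℝ) (πk : Fin d → Fin m) (εp : Fin d → ℝ)
    (hπk : varga γ (Pmat P πk) (Pmat Phat πk) (rvec r πk) W =
      Sstar γ P Phat r W + εp)
    (γ' : ℝ)
    (hγ'star : mnorm ((1 - γ • Pmat Phat πstar)⁻¹ *
      (γ • (Pmat P πstar - Pmat Phat πstar))) ≤ γ')
    (hγ'k : mnorm ((1 - γ • Pmat Phat πk)⁻¹ *
      (γ • (Pmat P πk - Pmat Phat πk))) ≤ γ')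
    (hγ'lt : γ' < 1)
    (Vpik : Fin d → ℝ)
    (hVpik : Vpik = ((1 - γ • Pmat P πk)⁻¹).mulVec (rvec r πk)) :
    vnorm (Vstar - Vpik) ≤
      2 * γ' / (1 - γ') * vnorm (Vstar - W) + 1 / (1 - γ') * vnorm εp := by
  simp only [vnorm_eq_norm]
  have hstoch := Pmat_mem_rowStochastic hP
  have hstoch_hat := Pmat_mem_rowStochastic hPhat
  have hfix_star : varga γ (Pmat P πstar) (Pmat Phat πstar) (rvec r πstar) Vstar = Vstar :=
    varga_eq_self (isUnit_det_one_sub_smul (hstoch_hat πstar) hγ0 hγ1)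
      (funext fun x => (hopt x).symm)
  have hfix_k : varga γ (Pmat P πk) (Pmat Phat πk) (rvec r πk) Vpik = Vpik := by
    refine varga_eq_self (isUnit_det_one_sub_smul (hstoch_hat πk) hγ0 hγ1) ?_
    rw [hVpik, ← inv_one_sub_smul_mulVec_eq (isUnit_det_one_sub_smul (hstoch πk) hγ0 hγ1)]
  have hgreedy : varga γ (Pmat P πstar) (Pmat Phat πstar) (rvec r πstar) W + εp ≤
      varga γ (Pmat P πk) (Pmat Phat πk) (rvec r πk) W :=
    hπk ▸ add_le_add_left (varga_le_Sstar γ P Phat r πstar W) εp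
  have hgap := sub_le_of_affine_of_fixed (varga_sub_varga _ _ _ _) (varga_sub_varga _ _ _ _)
    hfix_star hfix_k hgreedy
  have hVpik_le : Vpik ≤ Vstar := hVpik ▸
    inv_one_sub_smul_mulVec_le (hstoch πk) hγ0 hγ1 (rvec_add_smul_Pmat_mulVec_le hbell πk)
  calc ‖Vstar - Vpik‖ ≤ _ / (1 - γ') :=
        norm_le_of_le_add_mulVec (sub_nonneg.2 hVpik_le) hgap hγ'k hγ'lt
    _ ≤ (γ' * ‖Vstar - W‖ + γ' * ‖Vstar - W‖ + ‖εp‖) / (1 - γ') := by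
      gcongr
      refine (norm_sub_le _ _).trans
        (add_le_add_left ((norm_sub_le _ _).trans (add_le_add ?_ ?_)) _) <;>
        exact (norm_mulVec_le_mnorm_mul _ _).trans (by gcongr)
    _ = 2 * γ' / (1 - γ') * ‖Vstar - W‖ + 1 / (1 - γ') * ‖εp‖ := by ring

/-- Control, one-step suboptimality bound (Lemma 5):
`‖V* - V^{π_k}‖_∞ ≤ (2γ'/(1-γ'))‖V* - V_{k-1}‖_∞ + (1/(1-γ'))‖ε^policy_k‖_∞`. -/
theorem osvi_control_one_step {d m : ℕ} (hm : 0 < m)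
    (γ : ℝ) (hγ0 : 0 ≤ γ) (hγ1 : γ < 1)
    (P Phat : Fin d → Fin m → Fin d → ℝ) (r : Fin d → Fin m → ℝ)
    (hP : ∀ x a, (∀ y, 0 ≤ P x a y) ∧ ∑ y, P x a y = 1)
    (hPhat : ∀ x a, (∀ y, 0 ≤ Phat x a y) ∧ ∑ y, Phat x a y = 1)
    (Vstar : Fin d → ℝ) (πstar : Fin d → Fin m)
    (hbell : ∀ x, Vstar x = ⨆ a, (r x a + γ * ∑ y, P x a y * Vstar y))
    (hopt : ∀ x, Vstar x = r x (πstar x) + γ * ∑ y, P x (πstar x) y * Vstar y)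
    (W : Fin d → ℝ) (πk : Fin d → Fin m) (εp : Fin d → ℝ)
    (hπk : varga γ (Pmat P πk) (Pmat Phat πk) (rvec r πk) W =
      Sstar γ P Phat r W + εp)
    (γ' : ℝ)
    (hγ'star : mnorm ((1 - γ • Pmat Phat πstar)⁻¹ *
      (γ • (Pmat P πstar - Pmat Phat πstar))) ≤ γ')
    (hγ'k : mnorm ((1 - γ • Pmat Phat πk)⁻¹ *
      (γ • (Pmat P πk - Pmat Phat πk))) ≤ γ')
    (hγ'lt : γ' < 1)
    (Vpik : Fin d → ℝ)
    (hVpik : Vpik = ((1 - γ • Pmat P πk)⁻¹).mulVec (rvec r πk)) :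
    vnorm (Vstar - Vpik) ≤
      2 * γ' / (1 - γ') * vnorm (Vstar - W) + 1 / (1 - γ') * vnorm εp :=
  osvi_control_one_step_general γ hγ0 hγ1 P Phat r hP hPhat Vstar πstar hbell hopt W πk εp hπk γ'
    hγ'star hγ'k hγ'lt Vpik hVpik
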